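/- Let G be a graph, ω an end of G, and G' an induced subgraph of G with finite vertex-boundary ∂_v^G G' such that some end ω' of G' contains rays of ω. Then Dom_G(ω) ⊆ V(G'), where Dom_G(ω) is the set of vertices of G dominating ω. -/

import Mathlib

open scoped ENNReal

namespace Paper

variable {V : Type*} {W : Type*}

/-- Reachability in `G` by a walk avoiding the vertex set `S`. -/
def ReachAvoid (G : SimpleGraph V) (S : Set V) (u v : V) : Prop :=
  ∃ p : G.Walk u v, ∀ x ∈ p.support, x ∉ S

/-- A ray (one-way infinite path) in `G`. -/
structure IsRay (G : SimpleGraph V) (f : ℕ → V) : Prop where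
  inj : Function.Injective f
  adj : ∀ n, G.Adj (f n) (f (n + 1))

/-- Two rays are equivalent (belong to the same end) if no finite vertex set
separates them: for every finite `S` some vertex of the first ray can be joined
to some vertex of the second by a walk avoiding `S`. -/
def EquivRay (G : SimpleGraph V) (f g : ℕ → V) : Prop :=
  ∀ S : Set V, S.Finite → ∃ m n, ReachAvoid G S (f m) (g n)

/-- The set of ends of `G`: rays modulo equivalence. -/
def Ends (G : SimpleGraph V) :=
  Quot (fun f g : {f : ℕ → V // IsRay G f} => EquivRay G f.1 g.1)

/-- `v` dominates the ray `f`: there are infinitely many `v`–`V(f)` paths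
pairwise disjoint except in `v`. -/
def DominatesRay (G : SimpleGraph V) (v : V) (f : ℕ → V) : Prop :=
  ∃ (g : ℕ → ℕ) (p : ∀ n, G.Walk v (f (g n))),
    Function.Injective g ∧ (∀ n, (p n).IsPath) ∧
    ∀ m n, m ≠ n → ∀ x ∈ (p m).support, x ∈ (p n).support → x = v

/-- The set of vertices dominating the end of the ray `r`. -/
def Dom (G : SimpleGraph V) (r : ℕ → V) : Set V := {v | DominatesRay G v r}

/-- Vertex-boundary of the vertex set `A`. -/
def vBoundary (G : SimpleGraph V) (A : Set V) : Set V :=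
  {x | x ∈ A ∧ ∃ y, y ∉ A ∧ G.Adj x y}

/-- Edge-boundary of the vertex set `A`. -/
def eBoundary (G : SimpleGraph V) (A : Set V) : Set (Sym2 V) :=
  {e | ∃ x y, x ∈ A ∧ y ∉ A ∧ G.Adj x y ∧ e = s(x, y)}

/-- `S` is a `V'`–`Ω(A)` separator: `V' ⊄ S` and no component of `G - S`
contains both a vertex of `V'` and (the tail of) a ray lying in `A`. -/
def SepVertsEndsIn (G : SimpleGraph V) (V' S A : Set V) : Prop :=
  ¬ V' ⊆ S ∧ ∀ v ∈ V', ∀ f : ℕ → V, IsRay G f → Set.range f ⊆ A →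
    ∀ n, (∀ m, n ≤ m → f m ∉ S) → ¬ ReachAvoid G S v (f n)

/-- `S` is an inclusion-minimal `V'`–`Ω(A)` separator. -/
def MinSepVertsEndsIn (G : SimpleGraph V) (V' S A : Set V) : Prop :=
  SepVertsEndsIn G V' S A ∧ ∀ S' ⊂ S, ¬ SepVertsEndsIn G V' S' A

/-- The graph `G_ω`: `G` minus the dominating vertices of the end of `r`. -/
def Gmin (G : SimpleGraph V) (r : ℕ → V) : SimpleGraph ((Dom G r)ᶜ : Set V) :=
  G.induce ((Dom G r)ᶜ : Set V)

/-- A ray of `G_ω` belonging to (the unique end `ω̂` induced by) the end `ω` of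
the ray `r`. -/
def InDeletedEnd (G : SimpleGraph V) (r : ℕ → V)
    (f : ℕ → ((Dom G r)ᶜ : Set V)) : Prop :=
  IsRay (Gmin G r) f ∧ EquivRay G (fun n => (f n : V)) r

/-- An `ω̂`-region of `G_ω`: induced connected, finite vertex-boundary,
containing a ray of `ω̂`. -/
def IsOmegaRegion (G : SimpleGraph V) (r : ℕ → V)
    (A : Set ((Dom G r)ᶜ : Set V)) : Prop :=
  ((Gmin G r).induce A).Connected ∧ (vBoundary (Gmin G r) A).Finite ∧
    ∃ f, InDeletedEnd G r f ∧ Set.range f ⊆ A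

/-- `(Ĥ_i) → ω̂` : a sequence of distinct nested `ω̂`-regions whose
vertex-boundaries are minimal separators. -/
def Converges (G : SimpleGraph V) (r : ℕ → V)
    (A : ℕ → Set ((Dom G r)ᶜ : Set V)) : Prop :=
  Function.Injective A ∧ (∀ i, IsOmegaRegion G r (A i)) ∧
    (∀ i, A (i + 1) ⊆ A i \ vBoundary (Gmin G r) (A i)) ∧
    (∀ i, MinSepVertsEndsIn (Gmin G r) (vBoundary (Gmin G r) (A i))
      (vBoundary (Gmin G r) (A (i + 1))) (A (i + 1)))

/-- The ratio `|∂_e A| / |∂_v A|`, as an extended nonnegative real. -/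
noncomputable def bratio (G : SimpleGraph V) (A : Set V) : ℝ≥0∞ :=
  ((eBoundary G A).encard : ℝ≥0∞) / ((vBoundary G A).encard : ℝ≥0∞)

open Classical in
/-- The relative degree `d_{e/v}` of the end of the ray `r`. -/
noncomputable def relDegree (G : SimpleGraph V) (r : ℕ → V) : ℝ≥0∞ :=
  if (Dom G r).Infinite ∨ ¬ ∃ f, InDeletedEnd G r f then
    ((Dom G r).encard : ℝ≥0∞)
  else
    ((Dom G r).encard : ℝ≥0∞) +
      ⨅ A : {A : ℕ → Set ((Dom G r)ᶜ : Set V) // Converges G r A},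
        Filter.atTop.liminf fun i => bratio (Gmin G r) (A.1 i)

/-- The degree of a vertex, as an extended real. -/
noncomputable def degER (G : SimpleGraph V) (v : V) : EReal :=
  (((G.neighborSet v).encard : ℝ≥0∞) : EReal)

/-- A subdivision of `K_k` in `G` with branching vertices `b 0, …, b (k-1)`. -/
def HasTKOn (G : SimpleGraph V) {k : ℕ} (b : Fin k ↪ V) : Prop :=
  ∃ p : ∀ i j : Fin k, G.Walk (b i) (b j),
    (∀ i j, i ≠ j → (p i j).IsPath) ∧
    (∀ i j, i ≠ j → ∀ x ∈ (p i j).support, x ∈ Set.range b → x = b i ∨ x = b j) ∧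
    (∀ i j i' j', i ≠ j → i' ≠ j' → s(i, j) ≠ s(i', j') →
      ∀ x ∈ (p i j).support, x ∈ (p i' j').support → x ∈ Set.range b)

/-- `K_k` is a topological minor of `G`. -/
def HasTopK (G : SimpleGraph V) (k : ℕ) : Prop :=
  ∃ b : Fin k ↪ V, HasTKOn G b

/-- A subdivision of `K_{ℵ₀}` in `G` with branching vertices `b 0, b 1, …`. -/
def HasTKInfOn (G : SimpleGraph V) (b : ℕ ↪ V) : Prop :=
  ∃ p : ∀ i j : ℕ, G.Walk (b i) (b j),
    (∀ i j, i ≠ j → (p i j).IsPath) ∧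
    (∀ i j, i ≠ j → ∀ x ∈ (p i j).support, x ∈ Set.range b → x = b i ∨ x = b j) ∧
    (∀ i j i' j', i ≠ j → i' ≠ j' → s(i, j) ≠ s(i', j') →
      ∀ x ∈ (p i j).support, x ∈ (p i' j').support → x ∈ Set.range b)

/-- `K_k` is a minor of `G` (with finite branch sets). -/
def HasKMinor (G : SimpleGraph V) (k : ℕ) : Prop :=
  ∃ B : Fin k → Finset V,
    (∀ i, (B i).Nonempty) ∧ (∀ i j, i ≠ j → Disjoint (B i) (B j)) ∧
    (∀ i, (G.induce (B i : Set V)).Connected) ∧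
    (∀ i j, i ≠ j → ∃ x ∈ B i, ∃ y ∈ B j, G.Adj x y)

/-- The average degree of the finite induced subgraph of `G` on `s`. -/
noncomputable def avgDegOn (G : SimpleGraph V) (s : Finset V) : ℝ :=
  (∑ v ∈ s, ((G.neighborSet v ∩ ↑s).ncard : ℝ)) / s.card

/-- `G` is rayless. -/
def Rayless (G : SimpleGraph V) : Prop := ¬ ∃ f : ℕ → V, IsRay G f

/-- The average degree of the vertex set `F` into `A` in `G`. -/
noncomputable def avgDegIn (G : SimpleGraph V) (A F : Set V) : ℝ :=
  (∑ᶠ v ∈ F, ((G.neighborSet v ∩ A).ncard : ℝ)) / F.ncard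

/-! A dominating vertex `v ∉ A` is joined to a far-out tail of the ray `r` by a dominating path
avoiding the finite set `∂A`, and that tail avoids `∂A` as well; since `f` lies in the end of
`r`, some vertex of `A` reaches the same tail without crossing `∂A`. This gives an
`A`–`(V ∖ A)` walk missing the boundary, which is impossible. -/

namespace ReachAvoid

variable {G : SimpleGraph V} {S : Set V} {u v w : V}

lemma symm (h : ReachAvoid G S u v) : ReachAvoid G S v u := by
  obtain ⟨p, hp⟩ := h
  exact ⟨p.reverse, fun x hx => hp x (by simpa using hx)⟩

lemma trans (h₁ : ReachAvoid G S u v) (h₂ : ReachAvoid G S v w) : ReachAvoid G S u w := by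
  obtain ⟨p, hp⟩ := h₁
  obtain ⟨q, hq⟩ := h₂
  refine ⟨p.append q, fun x hx => ?_⟩
  rcases (SimpleGraph.Walk.mem_support_append_iff p q).1 hx with hx | hx
  exacts [hp x hx, hq x hx]

lemma mono {T : Set V} (h : ReachAvoid G S u v) (hTS : T ⊆ S) : ReachAvoid G T u v := by
  obtain ⟨p, hp⟩ := h
  exact ⟨p, fun x hx hxT => hp x hx (hTS hxT)⟩

lemma right_notMem (h : ReachAvoid G S u v) : v ∉ S := by
  obtain ⟨p, hp⟩ := h
  exact hp v p.end_mem_support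

lemma of_adj (huv : G.Adj u v) (hu : u ∉ S) (hv : v ∉ S) : ReachAvoid G S u v := by
  refine ⟨huv.toWalk, fun x hx => ?_⟩
  rcases List.mem_pair.1 (by simpa using hx) with rfl | rfl
  exacts [hu, hv]

end ReachAvoid

lemma not_reachAvoid_vBoundary {G : SimpleGraph V} {A : Set V} {a b : V}
    (ha : a ∈ A) (hb : b ∉ A) : ¬ ReachAvoid G (vBoundary G A) a b := by
  rintro ⟨p, hp⟩
  obtain ⟨d, hd, hdA, hdA'⟩ := p.exists_boundary_dart A ha hb
  exact hp d.fst (p.dart_fst_mem_support_of_mem_darts hd) ⟨hdA, d.snd, hdA', d.adj⟩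

lemma IsRay.reachAvoid_of_le {G : SimpleGraph V} {r : ℕ → V} (hr : IsRay G r) {S : Set V}
    {n k : ℕ} (hnk : n ≤ k) (hS : ∀ j, n ≤ j → r j ∉ S) : ReachAvoid G S (r n) (r k) := by
  induction k, hnk using Nat.le_induction with
  | base => exact ⟨.nil, fun x hx => by simpa [List.mem_singleton.1 hx] using hS n le_rfl⟩
  | succ k hnk ih =>
    exact ih.trans (.of_adj (hr.adj k) (hS k hnk) (hS (k + 1) (by omega)))

/-- Each vertex of `S` other than `v` lies on at most one of the dominating paths, so all but
finitely many of them avoid the finite set `S`. -/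
lemma DominatesRay.exists_reachAvoid_ge {G : SimpleGraph V} {v : V} {r : ℕ → V}
    (hv : DominatesRay G v r) {S : Set V} (hS : S.Finite) (hvS : v ∉ S) (n : ℕ) :
    ∃ k, n ≤ k ∧ ReachAvoid G S v (r k) := by
  obtain ⟨g, p, hg, -, hdisj⟩ := hv
  have hmeet : {i | ∃ s ∈ S, s ∈ (p i).support}.Finite := by
    have hsub : ∀ s ∈ S, {i | s ∈ (p i).support}.Subsingleton := fun s hs i hi j hj => by
      by_contra hij
      exact hvS (hdisj i j hij s hi hj ▸ hs)
    refine (hS.biUnion fun s hs => (hsub s hs).finite).subset ?_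
    rintro i ⟨s, hs, hsi⟩
    exact Set.mem_biUnion hs hsi
  have hlow : {i | g i < n}.Finite := (Set.finite_Iio n).preimage hg.injOn
  obtain ⟨i, hi⟩ := (hmeet.union hlow).infinite_compl.nonempty
  simp only [Set.mem_compl_iff, Set.mem_union, Set.mem_ofPred_eq, not_or, not_exists, not_and,
    not_lt] at hi
  exact ⟨g i, hi.2, p i, fun x hx hxS => hi.1 x hxS hx⟩

theorem dom_subset_of_finite_boundary_general (G : SimpleGraph V) (r : ℕ → V)
    (hr : IsRay G r) (A : Set V) (hb : (vBoundary G A).Finite)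
    (f : ℕ → A)
    (hequiv : EquivRay G (fun n => (f n : V)) r) :
    Dom G r ⊆ A := by
  intro v hv
  by_contra hvA
  obtain ⟨N, hN⟩ := (hb.preimage hr.inj.injOn).bddAbove
  have htail : ∀ j, N < j → r j ∉ vBoundary G A := fun j hj hjA => by
    have := hN hjA
    omega
  -- Adding `r 0, …, r N` to the separator forces the end vertex `r n` into the tail.
  obtain ⟨m, n, hmn⟩ := hequiv (vBoundary G A ∪ r '' Set.Iic N)
    (hb.union ((Set.finite_Iic N).image r))
  have hNn : N < n := by
    by_contra! hnN
    exact hmn.right_notMem (Or.inr ⟨n, hnN, rfl⟩)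
  obtain ⟨k, hnk, hvk⟩ := hv.exists_reachAvoid_ge hb (fun hv => hvA hv.1) n
  have hrnk : ReachAvoid G (vBoundary G A) (r n) (r k) :=
    hr.reachAvoid_of_le hnk fun j hj => htail j (by omega)
  exact not_reachAvoid_vBoundary (f m).2 hvA
    (((hmn.mono Set.subset_union_left).trans hrnk).trans hvk.symm)

/-- if `G'` is an induced subgraph of `G` (on the vertex set `A`)
with finite vertex-boundary and some end of `G'` contains rays of the end of
`r`, then all vertices dominating that end lie in `A`. -/
theorem dom_subset_of_finite_boundary (G : SimpleGraph V) (r : ℕ → V)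
    (hr : IsRay G r) (A : Set V) (hb : (vBoundary G A).Finite)
    (f : ℕ → A) (hf : IsRay (G.induce A) f)
    (hequiv : EquivRay G (fun n => (f n : V)) r) :
    Dom G r ⊆ A :=
  dom_subset_of_finite_boundary_general G r hr A hb f hequiv

end Paper
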